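/- Outer inclusion for the quantiled sub-level set. Let L : ℝ^d → ℝ be continuous, write L̲ := inf_θ L(θ) and Θ := argmin_θ L(θ), assume Θ ≠ ∅, and assume (A3): there exist L_∞, R_L, η_L > 0 and ν_L ∈ (0,∞) with dist(θ,Θ) ≤ (1/η_L)(L(θ)−L̲)^{ν_L} for all θ ∈ N_{R_L}(Θ), and L(θ)−L̲ > L_∞ for all θ ∉ N_{R_L}(Θ). Fix R > 0, δ_q > 0, r_G > 0, and let ϱ be a Borel probability measure on ℝ^d. If β ∈ (0,1) satisfies q_β[ϱ] + δ_q ≤ L̲ + min{L_∞, (η_L r_G)^{1/ν_L}}, then Q_β[ϱ] ⊆ N_{r_G}(Θ). -/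

import Mathlib

open MeasureTheory Set
open scoped RealInnerProductSpace ENNReal

noncomputable section

/-- The `a`-quantile of `ϱ` under `L`:
`q_a[ϱ] := inf {q : a ≤ ϱ({L ≤ q})}`. -/
def quant {d : ℕ} (L : EuclideanSpace ℝ (Fin d) → ℝ)
    (ϱ : Measure (EuclideanSpace ℝ (Fin d))) (a : ℝ) : ℝ :=
  sInf {q : ℝ | a ≤ (ϱ {θ | L θ ≤ q}).toReal}

/-- The quantiled sub-level set `Q_β[ϱ]`. -/
def Qset {d : ℕ} (L : EuclideanSpace ℝ (Fin d) → ℝ) (R δq β : ℝ)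
    (ϱ : Measure (EuclideanSpace ℝ (Fin d))) : Set (EuclideanSpace ℝ (Fin d)) :=
  {θ | θ ∈ Metric.closedBall (0 : EuclideanSpace ℝ (Fin d)) R ∧
    L θ ≤ (2 / β) * (∫ a in (β / 2)..β, quant L ϱ a) + δq}

/-- The argmin set `Θ` of `L`. -/
def argminSet {d : ℕ} (L : EuclideanSpace ℝ (Fin d) → ℝ) : Set (EuclideanSpace ℝ (Fin d)) :=
  {θ | ∀ θ', L θ ≤ L θ'}

/-- The neighborhood `N_r(S) = {θ : dist(θ, S) ≤ r}`. -/
def nbhd {d : ℕ} (S : Set (EuclideanSpace ℝ (Fin d))) (r : ℝ) :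
    Set (EuclideanSpace ℝ (Fin d)) :=
  {θ | Metric.infDist θ S ≤ r}

/-!
Since `L` attains its minimum `L̲`, the quantile `a ↦ q_a[ϱ]` is a monotone real-valued function
on `(0, 1)`, so its average over `[β/2, β]` is at most `q_β[ϱ]`. Hence every `θ ∈ Q_β[ϱ]` has
`L θ - L̲ ≤ min {L_∞, (η_L r_G)^{1/ν_L}}`: the first bound rules out `θ ∉ N_{R_L}(Θ)`, and then the
error bound of (A3) gives `dist(θ, Θ) ≤ η_L⁻¹ (L θ - L̲)^{ν_L} ≤ r_G`.
-/

open MeasureTheory Set Filter Topology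

theorem MonotoneOn.intervalIntegral_le_sub_mul {f : ℝ → ℝ} {a b : ℝ} (hab : a ≤ b)
    (hf : MonotoneOn f (Icc a b)) : ∫ x in a..b, f x ≤ (b - a) * f b := by
  have hf_int : IntervalIntegrable f volume a b := by
    rw [← uIcc_of_le hab] at hf
    exact hf.intervalIntegrable
  calc ∫ x in a..b, f x ≤ ∫ _ in a..b, f b :=
        intervalIntegral.integral_mono_on hab hf_int intervalIntegrable_const
          fun x hx => hf hx (right_mem_Icc.mpr hab) hx.2
    _ = (b - a) * f b := by rw [intervalIntegral.integral_const, smul_eq_mul]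

theorem tendsto_measure_sublevel_atTop {α : Type*} [MeasurableSpace α] (μ : Measure α)
    (L : α → ℝ) : Tendsto (fun q => μ {x | L x ≤ q}) atTop (𝓝 (μ univ)) := by
  have h_mono : Monotone fun q => {x | L x ≤ q} :=
    fun _ _ hqq' _ hx => le_trans hx hqq'
  have h_union : ⋃ q : ℝ, {x | L x ≤ q} = univ :=
    eq_univ_of_forall fun x => mem_iUnion.mpr ⟨L x, le_refl (L x)⟩
  simpa only [h_union, Function.comp_def] using tendsto_measure_iUnion_atTop h_mono

section Quantile

variable {d : ℕ} {L : EuclideanSpace ℝ (Fin d) → ℝ} {ϱ : Measure (EuclideanSpace ℝ (Fin d))}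

theorem bddBelow_quantileSet (hL : BddBelow (range L)) {a : ℝ} (ha : 0 < a) :
    BddBelow {q : ℝ | a ≤ (ϱ {θ | L θ ≤ q}).toReal} := by
  obtain ⟨m, hm⟩ := hL
  refine ⟨m, fun q hq => not_lt.mp fun hqm => ?_⟩
  have h_empty : {θ | L θ ≤ q} = ∅ :=
    eq_empty_of_forall_notMem fun θ hθ => (hm (mem_range_self θ)).not_gt (hθ.trans_lt hqm)
  simp only [mem_ofPred_eq, h_empty, measure_empty, ENNReal.toReal_zero] at hq
  linarith

theorem quantileSet_nonempty [IsProbabilityMeasure ϱ] {a : ℝ} (ha : a < 1) :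
    {q : ℝ | a ≤ (ϱ {θ | L θ ≤ q}).toReal}.Nonempty := by
  have h_tendsto : Tendsto (fun q => (ϱ {θ | L θ ≤ q}).toReal) atTop (𝓝 1) := by
    simpa only [measure_univ, ENNReal.toReal_one, Function.comp_def] using
      (ENNReal.tendsto_toReal (measure_ne_top ϱ univ)).comp (tendsto_measure_sublevel_atTop ϱ L)
  exact (h_tendsto.eventually_const_le ha).exists

theorem monotoneOn_quant [IsProbabilityMeasure ϱ] (hL : BddBelow (range L)) :
    MonotoneOn (quant L ϱ) (Ioo 0 1) := fun _ ha _ hb hab =>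
  csInf_le_csInf (bddBelow_quantileSet hL ha.1) (quantileSet_nonempty hb.2)
    fun _ hq => hab.trans hq

theorem average_quant_le [IsProbabilityMeasure ϱ] (hL : BddBelow (range L)) {β : ℝ}
    (hβ : β ∈ Ioo (0 : ℝ) 1) : (2 / β) * ∫ a in (β / 2)..β, quant L ϱ a ≤ quant L ϱ β := by
  obtain ⟨hβ0, hβ1⟩ := hβ
  have h_mono : MonotoneOn (quant L ϱ) (Icc (β / 2) β) :=
    (monotoneOn_quant hL).mono fun a ha => ⟨by linarith [ha.1], by linarith [ha.2]⟩
  calc (2 / β) * ∫ a in (β / 2)..β, quant L ϱ a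
      ≤ (2 / β) * ((β - β / 2) * quant L ϱ β) := by
        gcongr
        exact h_mono.intervalIntegral_le_sub_mul (by linarith)
    _ = quant L ϱ β := by field_simp; ring

end Quantile

theorem Qset_subset_nbhd_general {d : ℕ}
    (L : EuclideanSpace ℝ (Fin d) → ℝ)
    (θ0 : EuclideanSpace ℝ (Fin d)) (hθ0 : θ0 ∈ argminSet L)
    (Linfty RL ηL νL : ℝ) (hηL : 0 < ηL) (hνL : 0 < νL)
    (hA3a : ∀ θ ∈ nbhd (argminSet L) RL,
      Metric.infDist θ (argminSet L) ≤ (1 / ηL) * (L θ - L θ0) ^ νL)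
    (hA3b : ∀ θ, θ ∉ nbhd (argminSet L) RL → Linfty < L θ - L θ0)
    (R δq rg : ℝ) (hrg : 0 < rg)
    (ϱ : Measure (EuclideanSpace ℝ (Fin d))) [IsProbabilityMeasure ϱ]
    (β : ℝ) (hβ : β ∈ Set.Ioo (0 : ℝ) 1)
    (hqβ : quant L ϱ β + δq ≤ L θ0 + min Linfty ((ηL * rg) ^ (1 / νL))) :
    Qset L R δq β ϱ ⊆ nbhd (argminSet L) rg := by
  rintro θ ⟨-, hθ⟩
  have h_gap : L θ - L θ0 ≤ min Linfty ((ηL * rg) ^ (1 / νL)) := by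
    linarith [average_quant_le (ϱ := ϱ) ⟨L θ0, forall_mem_range.mpr hθ0⟩ hβ]
  have h_near : θ ∈ nbhd (argminSet L) RL :=
    not_not.mp fun h_far => (hA3b θ h_far).not_ge (h_gap.trans (min_le_left _ _))
  have h_pow : (L θ - L θ0) ^ νL ≤ ηL * rg := by
    rw [← Real.le_rpow_inv_iff_of_pos (sub_nonneg.mpr (hθ0 θ)) (by positivity) hνL, ← one_div]
    exact h_gap.trans (min_le_right _ _)
  calc Metric.infDist θ (argminSet L) ≤ (1 / ηL) * (L θ - L θ0) ^ νL := hA3a θ h_near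
    _ ≤ (1 / ηL) * (ηL * rg) := by gcongr
    _ = rg := by field_simp

/-- Outer inclusion for the quantiled sub-level set: `Q_β[ϱ] ⊆ N_{r_G}(Θ)`. -/
theorem Qset_subset_nbhd {d : ℕ} (hd : 1 ≤ d)
    (L : EuclideanSpace ℝ (Fin d) → ℝ) (hLc : Continuous L)
    (θ0 : EuclideanSpace ℝ (Fin d)) (hθ0 : θ0 ∈ argminSet L)
    (Linfty RL ηL νL : ℝ) (hLinfty : 0 < Linfty) (hRL : 0 < RL) (hηL : 0 < ηL) (hνL : 0 < νL)
    (hA3a : ∀ θ ∈ nbhd (argminSet L) RL,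
      Metric.infDist θ (argminSet L) ≤ (1 / ηL) * (L θ - L θ0) ^ νL)
    (hA3b : ∀ θ, θ ∉ nbhd (argminSet L) RL → Linfty < L θ - L θ0)
    (R δq rg : ℝ) (hR : 0 < R) (hδq : 0 < δq) (hrg : 0 < rg)
    (ϱ : Measure (EuclideanSpace ℝ (Fin d))) [IsProbabilityMeasure ϱ]
    (β : ℝ) (hβ : β ∈ Set.Ioo (0 : ℝ) 1)
    (hqβ : quant L ϱ β + δq ≤ L θ0 + min Linfty ((ηL * rg) ^ (1 / νL))) :
    Qset L R δq β ϱ ⊆ nbhd (argminSet L) rg :=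
  Qset_subset_nbhd_general L θ0 hθ0 Linfty RL ηL νL hηL hνL hA3a hA3b R δq rg hrg ϱ β hβ hqβ
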